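/- Assume 0 < h < 1 and 2/h ∉ ℤ, set n₀ = ⌊2/h⌋, and let L : (0,∞) → ℕ satisfy L(β) ≥ 2(n₀+2) for all β, lim_{β→∞} L(β)·( e^{−[(n₀+1)h−2]β} + e^{−hβ} ) = 0 and lim_{β→∞} L(β)⁴·e^{−(2−h)β} = 0. For each β, working on Ω_{L(β)}: lim_{β→∞} Cap_β({-1}, {+1}) / Cap_β({-1}, {0, +1}) = 1. -/

import Mathlib

open Classical Finset Filter Topology

noncomputable section

namespace BC

/-- Sites of the two-dimensional discrete torus of side `L`. -/
abbrev Site (L : ℕ) := ZMod L × ZMod L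

/-- Spin configurations: a spin `s : Fin 3` at a site encodes the value `s - 1 ∈ {-1,0,1}`. -/
abbrev Cfg (L : ℕ) := Site L → Fin 3

/-- The spin value in `{-1, 0, 1}` encoded by an element of `Fin 3`. -/
def sval (s : Fin 3) : ℤ := (s : ℤ) - 1

/-- The critical length `n₀ = ⌊2/h⌋`. -/
def n0 (h : ℝ) : ℕ := ⌊(2 : ℝ) / h⌋₊

/-- The configuration `-1` with all spins equal to `-1`. -/
def cminus (L : ℕ) : Cfg L := fun _ => 0

/-- The configuration `0` with all spins equal to `0`. -/
def czero (L : ℕ) : Cfg L := fun _ => 1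

/-- The configuration `+1` with all spins equal to `+1`. -/
def cplus (L : ℕ) : Cfg L := fun _ => 2

/-- Nearest-neighbour relation on the torus. -/
def nbr (L : ℕ) (x y : Site L) : Prop :=
  y = x + (1, 0) ∨ y = x - (1, 0) ∨ y = x + (0, 1) ∨ y = x - (0, 1)

/-- The four nearest neighbours of a site, as a finite set. -/
def nbrFinset (L : ℕ) (x : Site L) : Finset (Site L) :=
  {x + (1, 0), x - (1, 0), x + (0, 1), x - (0, 1)}

/-- The torus viewed as a simple graph with nearest-neighbour adjacency. -/
def torusGraph (L : ℕ) : SimpleGraph (Site L) where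
  Adj x y := x ≠ y ∧ nbr L x y
  symm := by
    refine ⟨?_⟩
    rintro x y ⟨hne, hn⟩
    refine ⟨hne.symm, ?_⟩
    unfold nbr at hn ⊢
    rcases hn with h1 | h1 | h1 | h1 <;> subst h1 <;> simp
  loopless := by refine ⟨?_⟩; rintro x ⟨hne, -⟩; exact hne rfl

/-- The `s × t` rectangle of sites with lower-left corner `a`. -/
def rect (L : ℕ) (a : Site L) (s t : ℕ) : Finset (Site L) :=
  (Finset.range s ×ˢ Finset.range t).image
    (fun p => (a.1 + (p.1 : ZMod L), a.2 + (p.2 : ZMod L)))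

/-- The four corners of the `s × t` rectangle with lower-left corner `a`. -/
def corners (L : ℕ) (a : Site L) (s t : ℕ) : Finset (Site L) :=
  {(a.1, a.2), (a.1 + ((s - 1 : ℕ) : ZMod L), a.2),
   (a.1, a.2 + ((t - 1 : ℕ) : ZMod L)),
   (a.1 + ((s - 1 : ℕ) : ZMod L), a.2 + ((t - 1 : ℕ) : ZMod L))}

/-- `S` is an `n × (n+1)` rectangle (in either orientation). -/
def isCritRect (L n : ℕ) (S : Finset (Site L)) : Prop :=
  ∃ a : Site L, S = rect L a n (n + 1) ∨ S = rect L a (n + 1) n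

/-- `S` is an `n × (n+1)` rectangle plus an extra site attached to a longest side. -/
def critRl (L n : ℕ) (S : Finset (Site L)) : Prop :=
  ∃ (a : Site L) (i : ℕ), i ≤ n ∧
    (S = insert (a.1 + (i : ZMod L), a.2 - 1) (rect L a (n + 1) n) ∨
     S = insert (a.1 + (i : ZMod L), a.2 + (n : ZMod L)) (rect L a (n + 1) n) ∨
     S = insert (a.1 - 1, a.2 + (i : ZMod L)) (rect L a n (n + 1)) ∨
     S = insert (a.1 + (n : ZMod L), a.2 + (i : ZMod L)) (rect L a n (n + 1)))

/-- `S` is an `n × (n+1)` rectangle plus an extra site attached to a longest side,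
next to a corner of the rectangle. -/
def critRlc (L n : ℕ) (S : Finset (Site L)) : Prop :=
  ∃ (a : Site L) (i : ℕ), i ≤ n ∧ (i = 0 ∨ i = n) ∧
    (S = insert (a.1 + (i : ZMod L), a.2 - 1) (rect L a (n + 1) n) ∨
     S = insert (a.1 + (i : ZMod L), a.2 + (n : ZMod L)) (rect L a (n + 1) n) ∨
     S = insert (a.1 - 1, a.2 + (i : ZMod L)) (rect L a n (n + 1)) ∨
     S = insert (a.1 + (n : ZMod L), a.2 + (i : ZMod L)) (rect L a n (n + 1)))

/-- `S` is an `n × (n+1)` rectangle plus an extra site attached to a longest side,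
away from the corners of the rectangle. -/
def critRli (L n : ℕ) (S : Finset (Site L)) : Prop :=
  ∃ (a : Site L) (i : ℕ), 0 < i ∧ i < n ∧
    (S = insert (a.1 + (i : ZMod L), a.2 - 1) (rect L a (n + 1) n) ∨
     S = insert (a.1 + (i : ZMod L), a.2 + (n : ZMod L)) (rect L a (n + 1) n) ∨
     S = insert (a.1 - 1, a.2 + (i : ZMod L)) (rect L a n (n + 1)) ∨
     S = insert (a.1 + (n : ZMod L), a.2 + (i : ZMod L)) (rect L a n (n + 1)))

/-- `S` is an `n × (n+1)` rectangle plus an extra site attached to a shortest side. -/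
def critRs (L n : ℕ) (S : Finset (Site L)) : Prop :=
  ∃ (a : Site L) (j : ℕ), j < n ∧
    (S = insert (a.1 - 1, a.2 + (j : ZMod L)) (rect L a (n + 1) n) ∨
     S = insert (a.1 + ((n + 1 : ℕ) : ZMod L), a.2 + (j : ZMod L)) (rect L a (n + 1) n) ∨
     S = insert (a.1 + (j : ZMod L), a.2 - 1) (rect L a n (n + 1)) ∨
     S = insert (a.1 + (j : ZMod L), a.2 + ((n + 1 : ℕ) : ZMod L)) (rect L a n (n + 1)))

/-- `S` is an `n × (n+1)` rectangle plus two mutually adjacent extra sites, each attached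
to a longest side. -/
def critRl2 (L n : ℕ) (S : Finset (Site L)) : Prop :=
  ∃ (a : Site L) (i : ℕ), i + 1 ≤ n ∧
    (S = rect L a (n + 1) n ∪
        {(a.1 + (i : ZMod L), a.2 - 1), (a.1 + (i : ZMod L) + 1, a.2 - 1)} ∨
     S = rect L a (n + 1) n ∪
        {(a.1 + (i : ZMod L), a.2 + (n : ZMod L)), (a.1 + (i : ZMod L) + 1, a.2 + (n : ZMod L))} ∨
     S = rect L a n (n + 1) ∪
        {(a.1 - 1, a.2 + (i : ZMod L)), (a.1 - 1, a.2 + (i : ZMod L) + 1)} ∨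
     S = rect L a n (n + 1) ∪
        {(a.1 + (n : ZMod L), a.2 + (i : ZMod L)), (a.1 + (n : ZMod L), a.2 + (i : ZMod L) + 1)})

section

variable (L : ℕ) [NeZero L]

/-- The Blume-Capel Hamiltonian with zero chemical potential and magnetic field `h`. -/
def ham (h : ℝ) (σ : Cfg L) : ℝ :=
  (∑ x : Site L,
     (((sval (σ (x + (1, 0))) : ℝ) - (sval (σ x) : ℝ)) ^ 2 +
      ((sval (σ (x + (0, 1))) : ℝ) - (sval (σ x) : ℝ)) ^ 2)) -
  h * ∑ x : Site L, (sval (σ x) : ℝ)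

/-- The set `A(σ)` of sites where the spin differs from `-1`. -/
def Asites (σ : Cfg L) : Finset (Site L) := univ.filter fun x => σ x ≠ 0

/-- `N(σ)`, the number of spins different from `-1`. -/
def Nsz (σ : Cfg L) : ℕ := (Asites L σ).card

/-- The set of sites where the spin differs from `0`. -/
def A0sites (σ : Cfg L) : Finset (Site L) := univ.filter fun x => σ x ≠ 1

/-- `σ^{x,+}` : flip the spin at `x` by `+1 mod 3`. -/
def flipUp (σ : Cfg L) (x : Site L) : Cfg L := Function.update σ x (σ x + 1)

/-- `σ^{x,-}` : flip the spin at `x` by `-1 mod 3`. -/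
def flipDown (σ : Cfg L) (x : Site L) : Cfg L := Function.update σ x (σ x - 1)

/-- Metropolis jump rate. -/
def rate (h β : ℝ) (σ τ : Cfg L) : ℝ := Real.exp (-β * max (ham L h τ - ham L h σ) 0)

/-- Holding rate `λ_β`. -/
def lam (h β : ℝ) (σ : Cfg L) : ℝ :=
  ∑ x : Site L, (rate L h β σ (flipUp L σ x) + rate L h β σ (flipDown L σ x))

/-- One-step average of `u` under the jump probabilities `p_β = R_β/λ_β`. -/
def avg (h β : ℝ) (u : Cfg L → ℝ) (σ : Cfg L) : ℝ :=
  (∑ x : Site L,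
     (rate L h β σ (flipUp L σ x) * u (flipUp L σ x) +
      rate L h β σ (flipDown L σ x) * u (flipDown L σ x))) / lam L h β σ

/-- `u` is harmonic (w.r.t. the jump probabilities `p_β`) on `D`. -/
def harmOn (h β : ℝ) (u : Cfg L → ℝ) (D : Set (Cfg L)) : Prop :=
  ∀ η ∈ D, u η = avg L h β u η

/-- Unnormalised Gibbs weight `e^{-β ℍ(σ)}`. -/
def gw (h β : ℝ) (σ : Cfg L) : ℝ := Real.exp (-β * ham L h σ)

/-- Two configurations differ at exactly one site. -/
def oneDiff (σ τ : Cfg L) : Prop := (univ.filter fun x => σ x ≠ τ x).card = 1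

/-- Dirichlet form of the chain reflected in `V`. -/
def dirV (h β : ℝ) (V : Set (Cfg L)) (f : Cfg L → ℝ) : ℝ :=
  (1 / 2) * ∑ σ : Cfg L, ∑ τ : Cfg L,
    if σ ∈ V ∧ τ ∈ V ∧ oneDiff L σ τ
    then min (gw L h β σ) (gw L h β τ) * (f τ - f σ) ^ 2 else 0

/-- Capacity (via the Dirichlet principle) for the chain reflected in `V`. -/
def capV (h β : ℝ) (V A B : Set (Cfg L)) : ℝ :=
  sInf { e : ℝ | ∃ f : Cfg L → ℝ, (∀ σ, 0 ≤ f σ ∧ f σ ≤ 1) ∧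
        (∀ σ ∈ A, f σ = 1) ∧ (∀ σ ∈ B, f σ = 0) ∧ e = dirV L h β V f }

/-- Dirichlet form of the full chain. -/
def dirForm (h β : ℝ) (f : Cfg L → ℝ) : ℝ :=
  (1 / 2) * ∑ σ : Cfg L, ∑ x : Site L,
    (min (gw L h β σ) (gw L h β (flipUp L σ x)) * (f (flipUp L σ x) - f σ) ^ 2 +
     min (gw L h β σ) (gw L h β (flipDown L σ x)) * (f (flipDown L σ x) - f σ) ^ 2)

/-- Capacity via the Dirichlet variational principle. -/
def capa (h β : ℝ) (A B : Set (Cfg L)) : ℝ :=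
  sInf { e : ℝ | ∃ f : Cfg L → ℝ, (∀ σ, 0 ≤ f σ ∧ f σ ≤ 1) ∧
        (∀ σ ∈ A, f σ = 1) ∧ (∀ σ ∈ B, f σ = 0) ∧ e = dirForm L h β f }

/-- Holding rate of the chain reflected in `V`. -/
def lamV (h β : ℝ) (V : Set (Cfg L)) (σ : Cfg L) : ℝ :=
  ∑ x : Site L,
    ((if flipUp L σ x ∈ V then rate L h β σ (flipUp L σ x) else 0) +
     (if flipDown L σ x ∈ V then rate L h β σ (flipDown L σ x) else 0))

/-- One-step average for the chain reflected in `V`. -/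
def avgV (h β : ℝ) (V : Set (Cfg L)) (u : Cfg L → ℝ) (σ : Cfg L) : ℝ :=
  (∑ x : Site L,
    ((if flipUp L σ x ∈ V then rate L h β σ (flipUp L σ x) * u (flipUp L σ x) else 0) +
     (if flipDown L σ x ∈ V then rate L h β σ (flipDown L σ x) * u (flipDown L σ x) else 0))) /
  lamV L h β V σ

/-- `R` : `0`-spins forming an `n × (n+1)` rectangle in a sea of `-1`-spins. -/
def setR (n : ℕ) : Set (Cfg L) :=
  {σ | (∀ x, σ x ≠ 2) ∧ isCritRect L n (Asites L σ)}

/-- `B` : configurations with exactly `n(n+1)` spins different from `-1`. -/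
def setB (n : ℕ) : Set (Cfg L) := {σ | Nsz L σ = n * (n + 1)}

/-- `R⁺` : an `n × (n+1)` rectangle of `0`-spins plus one extra spin (`0` or `+1`)
outside the rectangle, in a sea of `-1`-spins. -/
def setRplus (n : ℕ) : Set (Cfg L) :=
  {σ | ∃ (S : Finset (Site L)) (z : Site L), isCritRect L n S ∧ z ∉ S ∧
       Asites L σ = insert z S ∧ ∀ x ∈ S, σ x = 1}

/-- `Rᵃ` : an `n × (n+1)` rectangle of `0`-spins plus one extra `0`-spin attached to the
rectangle, in a sea of `-1`-spins. -/
def setRa (n : ℕ) : Set (Cfg L) :=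
  {σ | ∃ (S : Finset (Site L)) (z : Site L), isCritRect L n S ∧ z ∉ S ∧
       Asites L σ = insert z S ∧ (∀ x ∈ S, σ x = 1) ∧ σ z = 1 ∧ ∃ y ∈ S, nbr L z y}

/-- The valley `V₋₁` of the configuration `-1`. -/
def valleyM (n : ℕ) : Set (Cfg L) := {σ | Nsz L σ ≤ n * (n + 1)} ∪ setRplus L n

/-- `B⁺`, the boundary of the valley of `-1`. -/
def setBplus (n : ℕ) : Set (Cfg L) := (setB L n \ setR L n) ∪ setRplus L n

/-- `Rˡ` : critical droplet with the protuberance attached to a longest side. -/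
def setRl (n : ℕ) : Set (Cfg L) :=
  {σ | (∀ x, σ x ≠ 2) ∧ critRl L n (Asites L σ) ∧ Nsz L σ = n * (n + 1) + 1}

/-- `Rˡᶜ` : protuberance attached to a longest side next to a corner. -/
def setRlc (n : ℕ) : Set (Cfg L) :=
  {σ | (∀ x, σ x ≠ 2) ∧ critRlc L n (Asites L σ) ∧ Nsz L σ = n * (n + 1) + 1}

/-- `Rˡⁱ` : protuberance attached to a longest side away from the corners. -/
def setRli (n : ℕ) : Set (Cfg L) :=
  {σ | (∀ x, σ x ≠ 2) ∧ critRli L n (Asites L σ) ∧ Nsz L σ = n * (n + 1) + 1}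

/-- `Rˢ` : protuberance attached to a shortest side. -/
def setRs (n : ℕ) : Set (Cfg L) :=
  {σ | (∀ x, σ x ≠ 2) ∧ critRs L n (Asites L σ) ∧ Nsz L σ = n * (n + 1) + 1}

/-- `Rˡ₀` : critical droplet of `+1`-spins in a sea of `0`-spins, protuberance on a
longest side. -/
def setRl0 (n : ℕ) : Set (Cfg L) :=
  {σ | (∀ x, σ x ≠ 0) ∧ critRl L n (A0sites L σ) ∧ (A0sites L σ).card = n * (n + 1) + 1}

/-- The energy `Γ_c` of a critical droplet. -/
def GammaC (h : ℝ) : ℝ :=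
  4 * ((n0 h : ℝ) + 1) - h * (((n0 h * (n0 h + 1) + 1 : ℕ) : ℝ) - (L : ℝ) ^ 2)

/-- `δ₁(β) = e^{-hβ} + |Λ|^{1/2} e^{-(2-h)β} + |Λ| e^{-(4-h)β}`. -/
def delta1 (h β : ℝ) : ℝ :=
  Real.exp (-h * β) + (L : ℝ) * Real.exp (-(2 - h) * β) +
    (L : ℝ) ^ 2 * Real.exp (-(4 - h) * β)

/-- `δ₅(β) = e^{-[(n₀+1)h-2]β} + e^{-hβ} + |Λ|^{3/2} e^{-(2-h)β}`. -/
def delta5 (h β : ℝ) : ℝ :=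
  Real.exp (-(((n0 h : ℝ) + 1) * h - 2) * β) + Real.exp (-h * β) +
    (L : ℝ) ^ 3 * Real.exp (-(2 - h) * β)

/-- `δ(β) = |Λ|^{1/2} e^{-[(n₀+1)h-2]β} + |Λ|^{1/2} e^{-hβ} + |Λ|² e^{-(2-h)β}`. -/
def deltaP (h β : ℝ) : ℝ :=
  (L : ℝ) * Real.exp (-(((n0 h : ℝ) + 1) * h - 2) * β) + (L : ℝ) * Real.exp (-h * β) +
    (L : ℝ) ^ 4 * Real.exp (-(2 - h) * β)

end

end BC

/-!
The constant configuration `-1` has the highest energy `hL²`, and each of its neighbours costs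
at least `4 - h` more, so the indicator of `-1` shows
`cap(-1, {0, +1}) ≤ 2L² e^{-β(hL² + 4 - h)}`. On the other hand, filling the torus row by row
with `+1` joins `0` to `+1` through configurations of energy at most `4L`, so
`cap(0, +1) ≥ e^{-4Lβ} / (2L²)`; as `hL ≥ 4`, the first scale is at most `4L⁴ e^{-(2-h)β}` times
the second.

Let `f` be nearly optimal for `cap(-1, +1)` and `c = f(0)`. Truncating `f / c` shows
`c² cap(0, +1) ≤ D(f)`, so `c` is small, and `max ((f - c) / (1 - c), 0)` is a test function for
`cap(-1, {0, +1})` whose energy is at most `D(f) / (1 - c)²`. Together: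
`cap(-1, {0, +1}) ≤ cap(-1, +1) (1 + √(cap(-1, {0, +1}) / cap(0, +1)))²`.
-/

namespace BC

lemma le_mul_one_add_sqrt_div_sq {b κ c d : ℝ} (hb : 0 ≤ b) (hκ : 0 < κ) (hc0 : 0 ≤ c)
    (hc1 : c ≤ 1) (hbd : b * (1 - c) ^ 2 ≤ d) (hκd : c ^ 2 * κ ≤ d) :
    b ≤ d * (1 + √(b / κ)) ^ 2 := by
  have hd : 0 ≤ d := (mul_nonneg (sq_nonneg c) hκ.le).trans hκd
  have h1 : √b * (1 - c) ≤ √d := by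
    rw [← Real.sqrt_sq (sub_nonneg.mpr hc1), ← Real.sqrt_mul hb]
    exact Real.sqrt_le_sqrt hbd
  have h2 : c * √κ ≤ √d := by
    rw [← Real.sqrt_sq hc0, ← Real.sqrt_mul (sq_nonneg c)]
    exact Real.sqrt_le_sqrt hκd
  have hbκ : √b = √κ * √(b / κ) := by
    rw [← Real.sqrt_mul hκ.le, mul_div_cancel₀ _ hκ.ne']
  have key : √b ≤ √d * (1 + √(b / κ)) := by
    nlinarith [Real.sqrt_nonneg (b / κ)]
  calc b = √b ^ 2 := (Real.sq_sqrt hb).symm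
    _ ≤ (√d * (1 + √(b / κ))) ^ 2 := pow_le_pow_left₀ (Real.sqrt_nonneg b) key 2
    _ = d * (1 + √(b / κ)) ^ 2 := by rw [mul_pow, Real.sq_sqrt hd]

/-- The test functions of the Dirichlet principle defining `capa L h β A B`. -/
def Admissible (L : ℕ) (A B : Set (Cfg L)) (f : Cfg L → ℝ) : Prop :=
  (∀ σ, 0 ≤ f σ ∧ f σ ≤ 1) ∧ (∀ σ ∈ A, f σ = 1) ∧ (∀ σ ∈ B, f σ = 0)

lemma admissible_indicator {L : ℕ} {A B : Set (Cfg L)} (hAB : Disjoint A B) :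
    Admissible L A B (A.indicator 1) := by
  refine ⟨fun σ => ?_, fun σ hσ => by simp [hσ],
    fun σ hσ => by simp [hAB.notMem_of_mem_right hσ]⟩
  by_cases hσ : σ ∈ A <;> simp [hσ]

section Capacity

variable {L : ℕ} [NeZero L] {h β : ℝ}

lemma exp_neg_mul_le_gw {σ : Cfg L} {E : ℝ} (hβ : 0 ≤ β) (hσ : ham L h σ ≤ E) :
    Real.exp (-β * E) ≤ gw L h β σ :=
  Real.exp_le_exp.mpr (by nlinarith)

lemma gw_le_exp_neg_mul {σ : Cfg L} {E : ℝ} (hβ : 0 ≤ β) (hσ : E ≤ ham L h σ) :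
    gw L h β σ ≤ Real.exp (-β * E) :=
  Real.exp_le_exp.mpr (by nlinarith)

lemma min_gw_nonneg (σ τ : Cfg L) : 0 ≤ min (gw L h β σ) (gw L h β τ) :=
  le_min (Real.exp_pos _).le (Real.exp_pos _).le

lemma dirForm_nonneg (f : Cfg L → ℝ) : 0 ≤ dirForm L h β f := by
  unfold dirForm
  refine mul_nonneg (by norm_num) (sum_nonneg fun σ _ => sum_nonneg fun x _ => ?_)
  exact add_nonneg (mul_nonneg (min_gw_nonneg _ _) (sq_nonneg _))
    (mul_nonneg (min_gw_nonneg _ _) (sq_nonneg _))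

lemma dirForm_comp_le (f : Cfg L → ℝ) {φ : ℝ → ℝ} {K : ℝ}
    (hφ : ∀ a b, |φ a - φ b| ≤ K * |a - b|) :
    dirForm L h β (φ ∘ f) ≤ K ^ 2 * dirForm L h β f := by
  have hsq : ∀ a b, (φ a - φ b) ^ 2 ≤ K ^ 2 * (a - b) ^ 2 := fun a b => by
    rw [← sq_abs, ← sq_abs (a - b), ← mul_pow]
    exact pow_le_pow_left₀ (abs_nonneg _) (hφ a b) 2
  unfold dirForm
  rw [mul_left_comm (K ^ 2)]
  refine mul_le_mul_of_nonneg_left ?_ (by norm_num)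
  rw [mul_sum]
  refine sum_le_sum fun σ _ => ?_
  rw [mul_sum]
  refine sum_le_sum fun x _ => ?_
  rw [mul_add, mul_left_comm (K ^ 2), mul_left_comm (K ^ 2)]
  exact add_le_add (mul_le_mul_of_nonneg_left (hsq _ _) (min_gw_nonneg _ _))
    (mul_le_mul_of_nonneg_left (hsq _ _) (min_gw_nonneg _ _))

lemma capa_eq_sInf_image (A B : Set (Cfg L)) :
    capa L h β A B = sInf (dirForm L h β '' {f | Admissible L A B f}) := by
  unfold capa Admissible
  congr 1
  ext e
  simp only [Set.mem_ofPred_eq, Set.mem_image, and_assoc, eq_comm]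

lemma bddBelow_dirForm_image (S : Set (Cfg L → ℝ)) : BddBelow (dirForm L h β '' S) :=
  ⟨0, Set.forall_mem_image.mpr fun f _ => dirForm_nonneg f⟩

lemma capa_nonneg (A B : Set (Cfg L)) : 0 ≤ capa L h β A B := by
  rw [capa_eq_sInf_image]
  exact Real.sInf_nonneg (Set.forall_mem_image.mpr fun f _ => dirForm_nonneg f)

lemma capa_le_dirForm {A B : Set (Cfg L)} {f : Cfg L → ℝ} (hf : Admissible L A B f) :
    capa L h β A B ≤ dirForm L h β f := by
  rw [capa_eq_sInf_image]
  exact csInf_le (bddBelow_dirForm_image _) ⟨f, hf, rfl⟩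

lemma le_capa {A B : Set (Cfg L)} (hAB : Disjoint A B) {c : ℝ}
    (hc : ∀ f, Admissible L A B f → c ≤ dirForm L h β f) : c ≤ capa L h β A B := by
  rw [capa_eq_sInf_image]
  exact le_csInf ⟨_, _, admissible_indicator hAB, rfl⟩ (Set.forall_mem_image.mpr hc)

lemma exists_dirForm_lt_capa_add {A B : Set (Cfg L)} (hAB : Disjoint A B) {ε : ℝ}
    (hε : 0 < ε) : ∃ f, Admissible L A B f ∧ dirForm L h β f < capa L h β A B + ε := by
  rw [capa_eq_sInf_image]
  obtain ⟨_, ⟨f, hf, rfl⟩, hlt⟩ :=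
    Real.lt_sInf_add_pos (s := dirForm L h β '' {f | Admissible L A B f})
      ⟨_, _, admissible_indicator hAB, rfl⟩ hε
  exact ⟨f, hf, hlt⟩

lemma capa_mono_right {A B B' : Set (Cfg L)} (hBB' : B ⊆ B') (hAB' : Disjoint A B') :
    capa L h β A B ≤ capa L h β A B' :=
  le_capa hAB' fun _ ⟨hf01, hfA, hfB⟩ =>
    capa_le_dirForm ⟨hf01, hfA, fun σ hσ => hfB σ (hBB' hσ)⟩

variable {A B : Set (Cfg L)} {f : Cfg L → ℝ}

lemma sq_apply_mul_capa_le_dirForm (hf : Admissible L A B f) (z : Cfg L) :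
    f z ^ 2 * capa L h β {z} B ≤ dirForm L h β f := by
  obtain ⟨hf01, -, hfB⟩ := hf
  rcases (hf01 z).1.eq_or_lt with hc | hc
  · rw [← hc, sq, zero_mul, zero_mul]
    exact dirForm_nonneg f
  set c := f z
  have hlip : ∀ a b, |min (a / c) 1 - min (b / c) 1| ≤ c⁻¹ * |a - b| := fun a b => by
    refine (abs_min_sub_min_le_max _ _ _ _).trans ?_
    rw [sub_self, abs_zero, ← sub_div, abs_div, abs_of_pos hc, div_eq_inv_mul]
    exact max_le le_rfl (by positivity)
  have hu : Admissible L {z} B ((fun t => min (t / c) 1) ∘ f) := by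
    refine ⟨fun σ => ⟨le_min (div_nonneg (hf01 σ).1 hc.le) zero_le_one, min_le_right _ _⟩,
      fun σ hσ => ?_, fun σ hσ => ?_⟩
    · rw [Set.mem_singleton_iff.mp hσ]
      simp [c, div_self hc.ne']
    · simp [hfB σ hσ]
  calc c ^ 2 * capa L h β {z} B ≤ c ^ 2 * (c⁻¹ ^ 2 * dirForm L h β f) :=
        mul_le_mul_of_nonneg_left ((capa_le_dirForm hu).trans (dirForm_comp_le f hlip))
          (sq_nonneg c)
    _ = dirForm L h β f := by field_simp

lemma capa_insert_mul_sq_le_dirForm (hf : Admissible L A B f) (z : Cfg L) :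
    capa L h β A (insert z B) * (1 - f z) ^ 2 ≤ dirForm L h β f := by
  obtain ⟨hf01, hfA, hfB⟩ := hf
  rcases (hf01 z).2.eq_or_lt with hc | hc
  · rw [hc, sub_self, sq, mul_zero, mul_zero]
    exact dirForm_nonneg f
  set c := f z
  have hc' : 0 < 1 - c := sub_pos.mpr hc
  have hlip : ∀ a b, |max ((a - c) / (1 - c)) 0 - max ((b - c) / (1 - c)) 0|
      ≤ (1 - c)⁻¹ * |a - b| := fun a b => by
    refine (abs_max_sub_max_le_abs _ _ _).trans (le_of_eq ?_)
    rw [← sub_div, sub_sub_sub_cancel_right, abs_div, abs_of_pos hc', div_eq_inv_mul]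
  have hg : Admissible L A (insert z B) ((fun t => max ((t - c) / (1 - c)) 0) ∘ f) := by
    refine ⟨fun σ => ⟨le_max_right _ _, max_le ?_ zero_le_one⟩, fun σ hσ => ?_, ?_⟩
    · rw [div_le_one hc']
      linarith [(hf01 σ).2]
    · simp [hfA σ hσ, div_self hc'.ne']
    · rintro σ (rfl | hσ)
      · simp [c]
      · simp only [Function.comp_apply, hfB σ hσ, zero_sub, max_eq_right_iff]
        exact div_nonpos_of_nonpos_of_nonneg (by linarith [(hf01 z).1]) hc'.le
  calc capa L h β A (insert z B) * (1 - c) ^ 2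
      ≤ ((1 - c)⁻¹ ^ 2 * dirForm L h β f) * (1 - c) ^ 2 :=
        mul_le_mul_of_nonneg_right ((capa_le_dirForm hg).trans (dirForm_comp_le f hlip))
          (sq_nonneg _)
    _ = dirForm L h β f := by field_simp

lemma capa_insert_le (hAB : Disjoint A B) (z : Cfg L) (hz : 0 < capa L h β {z} B) :
    capa L h β A (insert z B) ≤
      capa L h β A B * (1 + √(capa L h β A (insert z B) / capa L h β {z} B)) ^ 2 := by
  set K := (1 + √(capa L h β A (insert z B) / capa L h β {z} B)) ^ 2
  have hK : 0 < K := by positivity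
  refine le_of_forall_pos_le_add fun ε hε => ?_
  obtain ⟨f, hf, hlt⟩ := exists_dirForm_lt_capa_add (h := h) (β := β) hAB (div_pos hε hK)
  calc capa L h β A (insert z B) ≤ dirForm L h β f * K :=
        le_mul_one_add_sqrt_div_sq (capa_nonneg _ _) hz (hf.1 z).1 (hf.1 z).2
          (capa_insert_mul_sq_le_dirForm hf z) (sq_apply_mul_capa_le_dirForm hf z)
    _ ≤ (capa L h β A B + ε / K) * K := mul_le_mul_of_nonneg_right hlt.le hK.le
    _ = capa L h β A B * K + ε := by field_simp

end Capacity

section Path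

variable {L : ℕ} [NeZero L] {h β : ℝ}

lemma sum_flipUp_terms_le_two_mul_dirForm (f : Cfg L → ℝ) (s : Finset (Cfg L × Site L)) :
    ∑ p ∈ s, min (gw L h β p.1) (gw L h β (flipUp L p.1 p.2)) *
      (f (flipUp L p.1 p.2) - f p.1) ^ 2 ≤ 2 * dirForm L h β f := by
  have hnonneg : ∀ σ τ : Cfg L, 0 ≤ min (gw L h β σ) (gw L h β τ) * (f τ - f σ) ^ 2 :=
    fun _ _ => mul_nonneg (min_gw_nonneg _ _) (sq_nonneg _)
  calc _ ≤ ∑ p : Cfg L × Site L, min (gw L h β p.1) (gw L h β (flipUp L p.1 p.2)) *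
          (f (flipUp L p.1 p.2) - f p.1) ^ 2 :=
        sum_le_sum_of_subset_of_nonneg (subset_univ s) fun _ _ _ => hnonneg _ _
    _ ≤ _ := by
        rw [Fintype.sum_prod_type, dirForm, ← mul_assoc, show (2 : ℝ) * (1 / 2) = 1 by norm_num,
          one_mul]
        exact sum_le_sum fun σ _ => sum_le_sum fun x _ =>
          le_add_of_nonneg_right (hnonneg σ _)

lemma exp_div_le_dirForm_of_path (f : Cfg L → ℝ) {n : ℕ} (hn : 0 < n) {E : ℝ} (hβ : 0 ≤ β)
    (π : ℕ → Cfg L) (xs : ℕ → Site L) (hstep : ∀ k < n, π (k + 1) = flipUp L (π k) (xs k))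
    (hinj : Set.InjOn π (Set.Iio n)) (hE : ∀ k ≤ n, ham L h (π k) ≤ E)
    (hf0 : f (π 0) = 1) (hfn : f (π n) = 0) :
    Real.exp (-β * E) / (2 * n) ≤ dirForm L h β f := by
  set F : Cfg L × Site L → ℝ := fun p =>
    min (gw L h β p.1) (gw L h β (flipUp L p.1 p.2)) * (f (flipUp L p.1 p.2) - f p.1) ^ 2
  have hF : ∑ k ∈ range n, F (π k, xs k) ≤ 2 * dirForm L h β f := by
    rw [← sum_image fun k hk l hl hkl => hinj (mem_range.mp hk) (mem_range.mp hl)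
      (congrArg Prod.fst hkl)]
    exact sum_flipUp_terms_le_two_mul_dirForm f _
  have hstepF : ∀ k ∈ range n,
      (f (π k) - f (π (k + 1))) ^ 2 ≤ Real.exp (β * E) * F (π k, xs k) := fun k hk => by
    have hk := mem_range.mp hk
    have hw : Real.exp (-β * E) ≤ min (gw L h β (π k)) (gw L h β (π (k + 1))) :=
      le_min (exp_neg_mul_le_gw hβ (hE k hk.le)) (exp_neg_mul_le_gw hβ (hE (k + 1) hk))
    have hexp : Real.exp (β * E) * Real.exp (-β * E) = 1 := by
      rw [← Real.exp_add, neg_mul, add_neg_cancel, Real.exp_zero]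
    calc (f (π k) - f (π (k + 1))) ^ 2
        = Real.exp (β * E) * (Real.exp (-β * E) * (f (π (k + 1)) - f (π k)) ^ 2) := by
          rw [← mul_assoc, hexp, one_mul, ← neg_sub, neg_sq]
      _ ≤ Real.exp (β * E) * F (π k, xs k) := by
          rw [hstep k hk] at hw ⊢
          exact mul_le_mul_of_nonneg_left (mul_le_mul_of_nonneg_right hw (sq_nonneg _))
            (Real.exp_pos _).le
  have hCS : (1 : ℝ) ≤ n * ∑ k ∈ range n, (f (π k) - f (π (k + 1))) ^ 2 := by
    have h1 : (∑ k ∈ range n, (f (π k) - f (π (k + 1)))) = 1 := by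
      rw [sum_range_sub' (fun k => f (π k)), hf0, hfn, sub_zero]
    simpa [h1] using sq_sum_le_card_mul_sum_sq (s := range n)
      (f := fun k => f (π k) - f (π (k + 1)))
  have hn' : (0 : ℝ) < n := Nat.cast_pos.mpr hn
  have hexp : Real.exp (-β * E) * Real.exp (β * E) = 1 := by
    rw [← Real.exp_add, neg_mul, neg_add_cancel, Real.exp_zero]
  have hmain : 1 ≤ n * (Real.exp (β * E) * (2 * dirForm L h β f)) :=
    hCS.trans (mul_le_mul_of_nonneg_left
      ((sum_le_sum hstepF).trans_eq (mul_sum _ _ _).symm |>.trans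
        (mul_le_mul_of_nonneg_left hF (Real.exp_pos _).le)) hn'.le)
  rw [div_le_iff₀ (by positivity)]
  nlinarith [Real.exp_pos (-β * E)]

end Path

/-- The changes can only happen at the last `i` where `P i.val` holds and at the wrap-around
`L - 1 → 0`. -/
lemma card_filter_not_iff_succ_le_two {L : ℕ} [NeZero L] (P : ℕ → Prop) [DecidablePred P]
    (hP : Antitone P) :
    #{i : ZMod L | ¬(P (i + 1).val ↔ P i.val)} ≤ 2 := by
  set M := #{v ∈ range L | P v}
  have hPM : ∀ v < L, (P v ↔ v < M) := fun v hv => by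
    constructor
    · intro hPv
      have hsub : range (v + 1) ⊆ {v ∈ range L | P v} := fun w hw => by
        have := mem_range.mp hw
        exact mem_filter.mpr ⟨mem_range.mpr (by omega), hP (by omega : w ≤ v) hPv⟩
      simpa using card_le_card hsub
    · intro hvM
      by_contra hnP
      have hsub : {v ∈ range L | P v} ⊆ range v := fun w hw => by
        obtain ⟨-, hPw⟩ := mem_filter.mp hw
        exact mem_range.mpr (by_contra fun hwv => hnP (hP (by omega : v ≤ w) hPw))
      have := card_le_card hsub
      rw [card_range] at this
      omega
  have hval : ∀ i : ZMod L, (i + 1).val = (i.val + 1) % L := fun i => by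
    rw [ZMod.val_add, ZMod.val_one_eq_one_mod, Nat.add_mod_mod]
  calc #{i : ZMod L | ¬(P (i + 1).val ↔ P i.val)}
      ≤ #({((M - 1 : ℕ) : ZMod L), ((L - 1 : ℕ) : ZMod L)} : Finset (ZMod L)) := by
        refine card_le_card fun i hi => ?_
        have hchange := (mem_filter.mp hi).2
        have hi := ZMod.val_lt i
        rw [hval] at hchange
        simp only [mem_insert, mem_singleton]
        by_cases hiL : i.val + 1 < L
        · rw [Nat.mod_eq_of_lt hiL, hPM _ hiL, hPM _ hi] at hchange
          left
          rw [← ZMod.natCast_zmod_val i]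
          congr 1
          omega
        · right
          rw [← ZMod.natCast_zmod_val i]
          congr 1
          omega
    _ ≤ 2 := card_le_two

section Threshold

variable {L : ℕ}

variable (L) in
def siteIndex (x : Site L) : ℕ := x.2.val * L + x.1.val

variable (L) in
def indexSite (k : ℕ) : Site L := (((k % L : ℕ) : ZMod L), ((k / L : ℕ) : ZMod L))

variable (L) in
def threshold (a b : Fin 3) (k : ℕ) : Cfg L := fun x => if siteIndex L x < k then a else b

lemma threshold_zero (a b : Fin 3) : threshold L a b 0 = fun _ => b := by
  funext x
  simp [threshold]

variable [NeZero L]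

lemma siteIndex_lt (x : Site L) : siteIndex L x < L ^ 2 := by
  have h1 := ZMod.val_lt x.1
  have h2 := ZMod.val_lt x.2
  have : (x.2.val + 1) * L ≤ L * L := Nat.mul_le_mul_right L h2
  unfold siteIndex
  nlinarith

lemma siteIndex_indexSite {k : ℕ} (hk : k < L ^ 2) : siteIndex L (indexSite L k) = k := by
  have hL : 0 < L := Nat.pos_of_neZero L
  have hdiv : k / L < L := (Nat.div_lt_iff_lt_mul hL).mpr (by rwa [← sq])
  simp only [siteIndex, indexSite, ZMod.val_cast_of_lt (Nat.mod_lt k hL), ZMod.val_cast_of_lt hdiv]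
  rw [mul_comm]
  exact Nat.div_add_mod k L

lemma siteIndex_injective : Function.Injective (siteIndex L) := fun x y hxy => by
  have hL : 0 < L := Nat.pos_of_neZero L
  have hmod : ∀ z : Site L, siteIndex L z % L = z.1.val := fun z => by
    simp [siteIndex, Nat.mod_eq_of_lt (ZMod.val_lt z.1)]
  have hdiv : ∀ z : Site L, siteIndex L z / L = z.2.val := fun z => by
    rw [siteIndex, add_comm, Nat.add_mul_div_right _ _ hL, Nat.div_eq_of_lt (ZMod.val_lt z.1),
      zero_add]
  exact Prod.ext (ZMod.val_injective _ (by rw [← hmod, ← hmod, hxy]))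
    (ZMod.val_injective _ (by rw [← hdiv, ← hdiv, hxy]))

lemma threshold_sq (a b : Fin 3) : threshold L a b (L ^ 2) = fun _ => a := by
  funext x
  simp [threshold, siteIndex_lt x]

lemma threshold_succ {a b : Fin 3} (hab : b + 1 = a) {k : ℕ} (hk : k < L ^ 2) :
    threshold L a b (k + 1) = flipUp L (threshold L a b k) (indexSite L k) := by
  funext x
  by_cases hx : x = indexSite L k
  · subst hx
    simp [flipUp, threshold, siteIndex_indexSite hk, hab]
  · have hne : siteIndex L x ≠ k := fun hxk =>
      hx (siteIndex_injective (by rw [hxk, siteIndex_indexSite hk]))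
    simp only [flipUp, Function.update_of_ne hx, threshold, Nat.lt_succ_iff_lt_or_eq, hne, or_false]

lemma threshold_injOn {a b : Fin 3} (hab : a ≠ b) :
    Set.InjOn (threshold L a b) (Set.Iic (L ^ 2)) := by
  suffices ∀ k l, l ≤ L ^ 2 → k < l → threshold L a b k ≠ threshold L a b l by
    intro k hk l hl he
    by_contra hne
    rcases Nat.lt_or_gt_of_ne hne with hlt | hlt
    · exact this k l hl hlt he
    · exact this l k hk hlt he.symm
  intro k l hl hkl he
  have hk : k < L ^ 2 := by omega
  have := congrFun he (indexSite L k)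
  simp only [threshold, siteIndex_indexSite hk, lt_irrefl, if_false, hkl, if_true] at this
  exact hab this.symm

end Threshold

section Energy

variable {L : ℕ} {h : ℝ}

lemma sq_sval_threshold_sub (a b : Fin 3) (k : ℕ) (x y : Site L) :
    ((sval (threshold L a b k y) : ℝ) - sval (threshold L a b k x)) ^ 2 =
      if (siteIndex L y < k ↔ siteIndex L x < k) then 0 else ((sval a : ℝ) - sval b) ^ 2 := by
  unfold threshold
  by_cases hy : siteIndex L y < k <;> by_cases hx : siteIndex L x < k <;> simp [hx, hy]
  ring

variable [NeZero L]

lemma card_horizontal_cut_le (k : ℕ) :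
    #{x : Site L | ¬(siteIndex L (x + (1, 0)) < k ↔ siteIndex L x < k)} ≤ 2 * L := by
  rw [card_filter, ← univ_product_univ, sum_product, sum_comm]
  calc _ ≤ ∑ _j : ZMod L, 2 := sum_le_sum fun j _ => by
        simpa [siteIndex, card_filter] using card_filter_not_iff_succ_le_two (L := L)
          (fun v => j.val * L + v < k) fun v w hvw hw => by omega
    _ = 2 * L := by simp [mul_comm]

lemma card_vertical_cut_le (k : ℕ) :
    #{x : Site L | ¬(siteIndex L (x + (0, 1)) < k ↔ siteIndex L x < k)} ≤ 2 * L := by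
  rw [card_filter, ← univ_product_univ, sum_product]
  calc _ ≤ ∑ _i : ZMod L, 2 := sum_le_sum fun i _ => by
        simpa [siteIndex, card_filter] using card_filter_not_iff_succ_le_two (L := L)
          (fun v => v * L + i.val < k) fun v w hvw hw => by
            have := Nat.mul_le_mul_right L hvw
            omega
    _ = 2 * L := by simp [mul_comm]

lemma interaction_threshold_le (a b : Fin 3) (k : ℕ) :
    ∑ x : Site L,
      (((sval (threshold L a b k (x + (1, 0))) : ℝ) - sval (threshold L a b k x)) ^ 2 +
       ((sval (threshold L a b k (x + (0, 1))) : ℝ) - sval (threshold L a b k x)) ^ 2)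
      ≤ 4 * L * ((sval a : ℝ) - sval b) ^ 2 := by
  simp only [sq_sval_threshold_sub, sum_add_distrib, sum_ite, sum_const_zero, zero_add,
    sum_const, nsmul_eq_mul]
  have hH : (#{x : Site L | ¬(siteIndex L (x + (1, 0)) < k ↔ siteIndex L x < k)} : ℝ) ≤ 2 * L := by
    exact_mod_cast card_horizontal_cut_le k
  have hV : (#{x : Site L | ¬(siteIndex L (x + (0, 1)) < k ↔ siteIndex L x < k)} : ℝ) ≤ 2 * L := by
    exact_mod_cast card_vertical_cut_le k
  nlinarith [sq_nonneg ((sval a : ℝ) - sval b)]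

lemma ham_threshold_two_one_le (hh : 0 ≤ h) (k : ℕ) : ham L h (threshold L 2 1 k) ≤ 4 * L := by
  have hint := interaction_threshold_le (L := L) 2 1 k
  have hfield : 0 ≤ ∑ x : Site L, (sval (threshold L 2 1 k x) : ℝ) :=
    sum_nonneg fun x _ => by unfold threshold; split_ifs <;> simp [sval]
  rw [show ((sval 2 : ℝ) - sval 1) ^ 2 = 1 by norm_num [sval], mul_one] at hint
  unfold ham
  nlinarith

end Energy

section Flip

variable {L : ℕ}

lemma flipUp_ne (σ : Cfg L) (x : Site L) : flipUp L σ x ≠ σ := fun he => by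
  have hs : ∀ s : Fin 3, s + 1 ≠ s := by decide
  exact hs (σ x) (by simpa [flipUp] using congrFun he x)

lemma flipDown_ne (σ : Cfg L) (x : Site L) : flipDown L σ x ≠ σ := fun he => by
  have hs : ∀ s : Fin 3, s - 1 ≠ s := by decide
  exact hs (σ x) (by simpa [flipDown] using congrFun he x)

lemma flipDown_flipUp (σ : Cfg L) (x : Site L) : flipDown L (flipUp L σ x) x = σ := by
  simp [flipUp, flipDown]

lemma flipUp_flipDown (σ : Cfg L) (x : Site L) : flipUp L (flipDown L σ x) x = σ := by
  simp [flipUp, flipDown]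

lemma flipUp_bijective (x : Site L) : Function.Bijective (flipUp L · x) :=
  Function.bijective_iff_has_inverse.mpr
    ⟨(flipDown L · x), fun σ => flipDown_flipUp σ x, fun σ => flipUp_flipDown σ x⟩

lemma flipDown_bijective (x : Site L) : Function.Bijective (flipDown L · x) :=
  Function.bijective_iff_has_inverse.mpr
    ⟨(flipUp L · x), fun σ => flipUp_flipDown σ x, fun σ => flipDown_flipUp σ x⟩

end Flip

section Indicator

variable {L : ℕ} [NeZero L] {h β : ℝ}

lemma dirForm_indicator_le {ξ : Cfg L} {e₀ : ℝ} (hup : ∀ x, gw L h β (flipUp L ξ x) ≤ e₀)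
    (hdown : ∀ x, gw L h β (flipDown L ξ x) ≤ e₀) :
    dirForm L h β (({ξ} : Set (Cfg L)).indicator 1) ≤ 2 * L ^ 2 * e₀ := by
  set χ := ({ξ} : Set (Cfg L)).indicator (1 : Cfg L → ℝ)
  have hχ : ∀ σ, χ σ = if σ = ξ then 1 else 0 := fun σ => by
    by_cases hσ : σ = ξ <;> simp [χ, hσ]
  have hedge : ∀ σ τ, τ ≠ σ → (σ = ξ → gw L h β τ ≤ e₀) → (τ = ξ → gw L h β σ ≤ e₀) →
      min (gw L h β σ) (gw L h β τ) * (χ τ - χ σ) ^ 2 ≤ e₀ * (χ σ + χ τ) := by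
    intro σ τ hne hσ hτ
    by_cases hσξ : σ = ξ
    · have hτξ : τ ≠ ξ := hσξ ▸ hne
      simpa [hχ, hσξ, hτξ] using (min_le_right _ _).trans (hσ hσξ)
    · by_cases hτξ : τ = ξ
      · simpa [hχ, hσξ, hτξ] using (min_le_left _ _).trans (hτ hτξ)
      · simp [hχ, hσξ, hτξ]
  have hsum : ∀ (g : Cfg L → Cfg L), Function.Bijective g → ∑ σ, χ (g σ) = 1 := fun g hg => by
    rw [Fintype.sum_bijective g hg (fun σ => χ (g σ)) χ fun _ => rfl, Fintype.sum_eq_single ξ]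
    · simp [hχ]
    · intro σ hσ
      simp [hχ, hσ]
  calc dirForm L h β χ
      ≤ (1 / 2) * ∑ σ, ∑ x : Site L,
          e₀ * ((χ σ + χ (flipUp L σ x)) + (χ σ + χ (flipDown L σ x))) := by
        refine mul_le_mul_of_nonneg_left (sum_le_sum fun σ _ => sum_le_sum fun x _ => ?_)
          (by norm_num)
        rw [mul_add]
        refine add_le_add (hedge _ _ (flipUp_ne σ x) (fun hσ => hσ ▸ hup x) fun hτ => ?_)
          (hedge _ _ (flipDown_ne σ x) (fun hσ => hσ ▸ hdown x) fun hτ => ?_)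
        · rw [← flipDown_flipUp σ x, hτ]
          exact hdown x
        · rw [← flipUp_flipDown σ x, hτ]
          exact hup x
    _ = 2 * L ^ 2 * e₀ := by
        rw [sum_comm]
        simp only [← mul_sum, sum_add_distrib]
        have hχ1 : ∑ σ, χ σ = 1 := hsum id Function.bijective_id
        simp only [hχ1, hsum _ (flipUp_bijective _), hsum _ (flipDown_bijective _), sum_const,
          card_univ, Fintype.card_prod, ZMod.card, nsmul_eq_mul]
        push_cast
        ring

end Indicator

section Defect

variable {L : ℕ} [NeZero L] {h β : ℝ}

lemma two_mul_sq_le_sum_shift_update_cminus {x e : Site L} (he : e ≠ 0) (s : Fin 3) :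
    2 * ((sval s : ℝ) + 1) ^ 2 ≤ ∑ y : Site L,
      ((sval (Function.update (cminus L) x s (y + e)) : ℝ) -
        sval (Function.update (cminus L) x s y)) ^ 2 := by
  have hxe : x + e ≠ x := fun hx => he (by simpa using hx)
  have hxe' : x - e ≠ x := fun hx => he (by simpa using hx)
  have hsum := add_le_sum (f := fun y : Site L =>
      ((sval (Function.update (cminus L) x s (y + e)) : ℝ) -
        sval (Function.update (cminus L) x s y)) ^ 2)
    (fun _ _ => sq_nonneg _) (mem_univ x) (mem_univ (x - e)) hxe'.symm
  simp only [sub_add_cancel, Function.update_self, Function.update_of_ne hxe,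
    Function.update_of_ne hxe', cminus] at hsum
  norm_num [sval] at hsum ⊢
  linarith

/-- A single defect `s` in the sea of `-1`: its four bonds cost `(sval s + 1)²` each. -/
lemma ham_update_cminus_ge (hL : 1 < L) (x : Site L) (s : Fin 3) :
    h * L ^ 2 + 4 * ((sval s : ℝ) + 1) ^ 2 - h * ((sval s : ℝ) + 1) ≤
      ham L h (Function.update (cminus L) x s) := by
  have : Fact (1 < L) := ⟨hL⟩
  set σ := Function.update (cminus L) x s
  have hfield : ∑ y, (sval (σ y) : ℝ) = (sval s + 1) - L ^ 2 := by
    have : ∑ y, ((sval (σ y) : ℝ) + 1) = sval s + 1 := by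
      rw [Fintype.sum_eq_single x fun y hy => by simp [σ, hy, cminus, sval]]
      simp [σ]
    rw [sum_add_distrib, sum_const, card_univ, Fintype.card_prod, ZMod.card, nsmul_eq_mul] at this
    push_cast at this
    linarith
  have hH := two_mul_sq_le_sum_shift_update_cminus (x := x) (e := ((1 : ZMod L), (0 : ZMod L)))
    (by simp [Prod.ext_iff]) s
  have hV := two_mul_sq_le_sum_shift_update_cminus (x := x) (e := ((0 : ZMod L), (1 : ZMod L)))
    (by simp [Prod.ext_iff]) s
  unfold ham
  rw [sum_add_distrib, hfield]
  linarith

/-- A `0` defect costs `4 - h`, a `+1` defect `16 - 2h`; hence the bound `h ≤ 12`. -/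
lemma gw_flip_cminus_le (hL : 1 < L) (hh : h ≤ 12) (hβ : 0 ≤ β) (x : Site L) :
    gw L h β (flipUp L (cminus L) x) ≤ Real.exp (-β * (4 - h + h * L ^ 2)) ∧
      gw L h β (flipDown L (cminus L) x) ≤ Real.exp (-β * (4 - h + h * L ^ 2)) := by
  have h1 := ham_update_cminus_ge (h := h) hL x 1
  have h2 := ham_update_cminus_ge (h := h) hL x 2
  norm_num [sval] at h1 h2
  have hup : flipUp L (cminus L) x = Function.update (cminus L) x 1 := rfl
  have hdown : flipDown L (cminus L) x = Function.update (cminus L) x 2 := rfl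
  rw [hup, hdown]
  exact ⟨gw_le_exp_neg_mul hβ (by linarith), gw_le_exp_neg_mul hβ (by linarith)⟩

end Defect

section Estimates

variable {L : ℕ} {h β : ℝ}

lemma cminus_ne_czero : cminus L ≠ czero L := fun he => by
  simpa [cminus, czero] using congrFun he 0

lemma cminus_ne_cplus : cminus L ≠ cplus L := fun he => by
  simpa [cminus, cplus] using congrFun he 0

lemma czero_ne_cplus : czero L ≠ cplus L := fun he => by
  simpa [czero, cplus] using congrFun he 0

lemma disjoint_cminus_czero_cplus : Disjoint ({cminus L} : Set (Cfg L)) {czero L, cplus L} := by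
  simp [cminus_ne_czero, cminus_ne_cplus]

variable [NeZero L]

lemma exp_div_le_capa_of_threshold {a b : Fin 3} (hab : b + 1 = a) {A B : Set (Cfg L)}
    (hAB : Disjoint A B) (hA : (fun _ => b) ∈ A) (hB : (fun _ => a) ∈ B) {E : ℝ} (hβ : 0 ≤ β)
    (hE : ∀ k ≤ L ^ 2, ham L h (threshold L a b k) ≤ E) :
    Real.exp (-β * E) / (2 * L ^ 2) ≤ capa L h β A B := by
  have hsucc : ∀ c : Fin 3, c + 1 ≠ c := by decide
  have hne : a ≠ b := fun he => hsucc b (hab.trans he)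
  refine le_capa hAB fun f ⟨_, hfA, hfB⟩ => ?_
  have := exp_div_le_dirForm_of_path f (pow_pos (Nat.pos_of_neZero L) 2) hβ (threshold L a b)
    (indexSite L) (fun k hk => threshold_succ hab hk)
    ((threshold_injOn hne).mono Set.Iio_subset_Iic_self) hE
    (by rw [threshold_zero]; exact hfA _ hA) (by rw [threshold_sq]; exact hfB _ hB)
  exact_mod_cast this

lemma capa_czero_cplus_ge (hh : 0 ≤ h) (hβ : 0 ≤ β) :
    Real.exp (-β * (4 * L)) / (2 * L ^ 2) ≤ capa L h β {czero L} {cplus L} :=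
  exp_div_le_capa_of_threshold (a := 2) (b := 1) rfl
    (Set.disjoint_singleton.mpr czero_ne_cplus) rfl rfl hβ
    fun k _ => ham_threshold_two_one_le hh k

lemma capa_cminus_pos (hβ : 0 ≤ β) : 0 < capa L h β {cminus L} {czero L, cplus L} := by
  obtain ⟨E, hE⟩ := Finite.bddAbove_range (ham L h)
  have := exp_div_le_capa_of_threshold (a := 1) (b := 0) (h := h) rfl
    disjoint_cminus_czero_cplus rfl (Set.mem_insert _ _) hβ fun k _ => hE ⟨_, rfl⟩
  have hL : 0 < L := Nat.pos_of_neZero L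
  exact lt_of_lt_of_le (by positivity) this

lemma capa_cminus_le (hL : 1 < L) (hh : h ≤ 12) (hβ : 0 ≤ β) :
    capa L h β {cminus L} {czero L, cplus L} ≤
      2 * L ^ 2 * Real.exp (-β * (4 - h + h * L ^ 2)) :=
  (capa_le_dirForm (admissible_indicator disjoint_cminus_czero_cplus)).trans
    (dirForm_indicator_le (fun x => (gw_flip_cminus_le hL hh hβ x).1)
      fun x => (gw_flip_cminus_le hL hh hβ x).2)

lemma capa_ratio_bounds (hL : 1 < L) (hh0 : 0 ≤ h) (hh : h ≤ 12) (hhL : 4 ≤ h * L)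
    (hβ : 0 ≤ β) :
    1 / (1 + √(4 * L ^ 4 * Real.exp (-(2 - h) * β))) ^ 2 ≤
        capa L h β {cminus L} {cplus L} / capa L h β {cminus L} {czero L, cplus L} ∧
      capa L h β {cminus L} {cplus L} / capa L h β {cminus L} {czero L, cplus L} ≤ 1 := by
  set a := capa L h β {cminus L} {cplus L}
  set b := capa L h β {cminus L} {czero L, cplus L}
  set κ := capa L h β {czero L} {cplus L}
  set q := 4 * (L : ℝ) ^ 4 * Real.exp (-(2 - h) * β)
  have hb : 0 < b := capa_cminus_pos hβ
  have hV : Real.exp (-β * (4 * L)) / (2 * L ^ 2) ≤ κ := capa_czero_cplus_ge hh0 hβ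
  have hVpos : 0 < Real.exp (-β * (4 * L)) / (2 * L ^ 2) := by positivity
  have hUV : 2 * L ^ 2 * Real.exp (-β * (4 - h + h * L ^ 2)) ≤
      q * (Real.exp (-β * (4 * L)) / (2 * L ^ 2)) := by
    have hexp : Real.exp (-β * (4 - h + h * L ^ 2)) ≤
        Real.exp (-(2 - h) * β) * Real.exp (-β * (4 * L)) := by
      rw [← Real.exp_add]
      exact Real.exp_le_exp.mpr (by nlinarith [mul_nonneg hβ (mul_nonneg
        (by positivity : (0 : ℝ) ≤ L) (sub_nonneg.mpr hhL))])
    calc _ ≤ 2 * L ^ 2 * (Real.exp (-(2 - h) * β) * Real.exp (-β * (4 * L))) := by gcongr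
      _ = q * (Real.exp (-β * (4 * L)) / (2 * L ^ 2)) := by simp only [q]; field_simp; ring
  have hbκ : b / κ ≤ q := by
    rw [div_le_iff₀ (hVpos.trans_le hV)]
    exact (capa_cminus_le hL hh hβ).trans (hUV.trans (by gcongr))
  have hins : b ≤ a * (1 + √(b / κ)) ^ 2 :=
    capa_insert_le (Set.disjoint_singleton.mpr cminus_ne_cplus) (czero L) (hVpos.trans_le hV)
  have hab : a ≤ b := capa_mono_right (Set.subset_insert _ _) disjoint_cminus_czero_cplus
  refine ⟨?_, div_le_one_of_le₀ hab hb.le⟩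
  calc 1 / (1 + √q) ^ 2 ≤ 1 / (1 + √(b / κ)) ^ 2 := by gcongr
    _ ≤ a / b := by
      rw [div_le_div_iff₀ (by positivity) hb]
      linarith

end Estimates

lemma four_le_mul_of_two_mul_n0_add_two_le {h : ℝ} (h0 : 0 < h) {L : ℕ}
    (hL : 2 * (n0 h + 2) ≤ L) : 4 ≤ h * L := by
  have hfloor : 2 / h < n0 h + 1 := Nat.lt_floor_add_one _
  rw [div_lt_iff₀ h0] at hfloor
  have hL' : (2 * (n0 h + 2) : ℝ) ≤ L := by exact_mod_cast hL
  nlinarith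

end BC

/-- Lemma (as64) : `cap(-1, +1) / cap(-1, {0, +1}) → 1`. -/
theorem stmt_17 (h : ℝ) (h0 : 0 < h) (h1 : h < 1)
    (L : ℝ → ℕ) (hL : ∀ β : ℝ, 2 * (BC.n0 h + 2) ≤ L β)
    (hlim2 : Filter.Tendsto (fun β : ℝ => (L β : ℝ) ^ 4 * Real.exp (-(2 - h) * β))
      Filter.atTop (nhds 0)) :
    Filter.Tendsto (fun β : ℝ =>
      letI : NeZero (L β) := ⟨by have := hL β; omega⟩
      BC.capa (L β) h β {BC.cminus (L β)} {BC.cplus (L β)} /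
        BC.capa (L β) h β {BC.cminus (L β)} {BC.czero (L β), BC.cplus (L β)})
      Filter.atTop (nhds 1) := by
  have hlower : Tendsto (fun β => 1 / (1 + √(4 * (L β : ℝ) ^ 4 * Real.exp (-(2 - h) * β))) ^ 2)
      atTop (𝓝 1) := by
    have := (((hlim2.const_mul 4).sqrt.const_add 1).pow 2).inv₀ (by norm_num)
    simpa [mul_assoc] using this
  refine tendsto_of_tendsto_of_tendsto_of_le_of_le' hlower tendsto_const_nhds ?_ ?_ <;>
    filter_upwards [eventually_ge_atTop 0] with β hβ <;>
    have : NeZero (L β) := ⟨by have := hL β; omega⟩ <;>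
    have hbounds := BC.capa_ratio_bounds (L := L β) (by have := hL β; omega) h0.le (by linarith)
      (BC.four_le_mul_of_two_mul_n0_add_two_le h0 (hL β)) hβ
  exacts [hbounds.1, hbounds.2]
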